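/- Distinct ∨-resolutions of any formula A always have distinct leaf sets, i.e. the map sending each ∨-resolution of A to its leaf set is injective, so the number of cliques of A equals the number of ∨-resolutions of A. -/
import Mathlib


/-- Literals: propositional variables and their negations. -/
inductive Lit where
  | pos : Nat → Lit
  | neg : Nat → Lit
deriving DecidableEq

/-- Formulas of classical propositional logic, built from literals by binary ∧ and ∨. -/
inductive Formula where
  | lit : Lit → Formula
  | and : Formula → Formula → Formula
  | or  : Formula → Formula → Formula

/-- Leaves of the parse tree, identified by their positions (paths: `false` = left,
`true` = right). -/
def Formula.leaves : Formula → Set (List Bool)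
  | .lit _ => {[]}
  | .and A B => (fun p => false :: p) '' A.leaves ∪ (fun p => true :: p) '' B.leaves
  | .or A B  => (fun p => false :: p) '' A.leaves ∪ (fun p => true :: p) '' B.leaves

/-- The literal labelling the leaf at a given path, if any. -/
def Formula.labelAt : Formula → List Bool → Option Lit
  | .lit l, [] => some l
  | .and A B, b :: p => if b then B.labelAt p else A.labelAt p
  | .or A B, b :: p => if b then B.labelAt p else A.labelAt p
  | _, _ => none

/-- ∨-resolutions of a formula: delete one argument subtree at each ∨-vertex. -/
inductive Res : Formula → Type where
  | lit : (l : Lit) → Res (.lit l)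
  | and : {A B : Formula} → Res A → Res B → Res (.and A B)
  | orL : {A B : Formula} → Res A → Res (.or A B)
  | orR : {A B : Formula} → Res B → Res (.or A B)

/-- The set of leaves of `A` retained by an ∨-resolution. -/
def Res.leafSet : {A : Formula} → Res A → Set (List Bool)
  | _, .lit _ => {[]}
  | _, .and ra rb => (fun p => false :: p) '' ra.leafSet ∪ (fun p => true :: p) '' rb.leafSet
  | _, .orL ra => (fun p => false :: p) '' ra.leafSet
  | _, .orR rb => (fun p => true :: p) '' rb.leafSet

/-- Cliques: leaf sets of ∨-resolutions. -/
def Formula.cliques (A : Formula) : Set (Set (List Bool)) :=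
  {L | ∃ r : Res A, r.leafSet = L}

/-- ∧-resolutions of a formula: delete one argument subtree at each ∧-vertex. -/
inductive CoRes : Formula → Type where
  | lit : (l : Lit) → CoRes (.lit l)
  | or : {A B : Formula} → CoRes A → CoRes B → CoRes (.or A B)
  | andL : {A B : Formula} → CoRes A → CoRes (.and A B)
  | andR : {A B : Formula} → CoRes B → CoRes (.and A B)

/-- The set of leaves of `A` retained by an ∧-resolution. -/
def CoRes.leafSet : {A : Formula} → CoRes A → Set (List Bool)
  | _, .lit _ => {[]}
  | _, .or ra rb => (fun p => false :: p) '' ra.leafSet ∪ (fun p => true :: p) '' rb.leafSet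
  | _, .andL ra => (fun p => false :: p) '' ra.leafSet
  | _, .andR rb => (fun p => true :: p) '' rb.leafSet

/-- Co-cliques: leaf sets of ∧-resolutions. -/
def Formula.cocliques (A : Formula) : Set (Set (List Bool)) :=
  {M | ∃ r : CoRes A, r.leafSet = M}

/-- Truth of a literal under a valuation. -/
def Lit.eval (v : Nat → Bool) : Lit → Bool
  | .pos n => v n
  | .neg n => !(v n)

/-- Standard Boolean semantics. -/
def Formula.eval (v : Nat → Bool) : Formula → Bool
  | .lit l => l.eval v
  | .and A B => A.eval v && B.eval v
  | .or A B => A.eval v || B.eval v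

/-- Number of ∨-vertices in the parse tree. -/
def Formula.orCount : Formula → Nat
  | .lit _ => 0
  | .and A B => A.orCount + B.orCount
  | .or A B => A.orCount + B.orCount + 1

/-- Number of ∧-vertices in the parse tree. -/
def Formula.andCount : Formula → Nat
  | .lit _ => 0
  | .and A B => A.andCount + B.andCount + 1
  | .or A B => A.andCount + B.andCount

/-- Complement of a literal. -/
def Lit.compl : Lit → Lit
  | .pos n => .neg n
  | .neg n => .pos n

/-- De Morgan dual: swap ∧ with ∨ and negate every literal. -/
def Formula.dual : Formula → Formula
  | .lit l => .lit l.compl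
  | .and A B => .or A.dual B.dual
  | .or A B => .and A.dual B.dual

lemma Res.leafSet_nonempty : {A : Formula} → (r : Res A) → r.leafSet.Nonempty
  | _, .lit _ => ⟨[], rfl⟩
  | _, .and ra rb => by
      obtain ⟨p, hp⟩ := ra.leafSet_nonempty
      exact ⟨false :: p, Or.inl ⟨p, hp, rfl⟩⟩
  | _, .orL ra => by
      obtain ⟨p, hp⟩ := ra.leafSet_nonempty
      exact ⟨false :: p, ⟨p, hp, rfl⟩⟩
  | _, .orR rb => by
      obtain ⟨p, hp⟩ := rb.leafSet_nonempty
      exact ⟨true :: p, ⟨p, hp, rfl⟩⟩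

lemma cons_inj (b : Bool) : Function.Injective (fun p : List Bool => b :: p) :=
  fun _ _ h => List.tail_eq_of_cons_eq h

lemma image_cons_eq {X Y : Set (List Bool)} {b : Bool}
    (h : (fun p => b :: p) '' X = (fun p => b :: p) '' Y) : X = Y :=
  (Set.image_eq_image (cons_inj b)).1 h

lemma union_split {X Y X' Y' : Set (List Bool)}
    (h : (fun p => false :: p) '' X ∪ (fun p => true :: p) '' Y =
         (fun p => false :: p) '' X' ∪ (fun p => true :: p) '' Y') :
    X = X' ∧ Y = Y' := by
  constructor
  · ext p
    constructor
    · intro hp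
      have : (false :: p) ∈ (fun p => false :: p) '' X' ∪ (fun p => true :: p) '' Y' := by
        rw [← h]; exact Or.inl ⟨p, hp, rfl⟩
      rcases this with ⟨q, hq, e⟩ | ⟨q, hq, e⟩
      · cases e; exact hq
      · simp at e
    · intro hp
      have : (false :: p) ∈ (fun p => false :: p) '' X ∪ (fun p => true :: p) '' Y := by
        rw [h]; exact Or.inl ⟨p, hp, rfl⟩
      rcases this with ⟨q, hq, e⟩ | ⟨q, hq, e⟩
      · cases e; exact hq
      · simp at e
  · ext p
    constructor
    · intro hp
      have : (true :: p) ∈ (fun p => false :: p) '' X' ∪ (fun p => true :: p) '' Y' := by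
        rw [← h]; exact Or.inr ⟨p, hp, rfl⟩
      rcases this with ⟨q, hq, e⟩ | ⟨q, hq, e⟩
      · simp at e
      · cases e; exact hq
    · intro hp
      have : (true :: p) ∈ (fun p => false :: p) '' X ∪ (fun p => true :: p) '' Y := by
        rw [h]; exact Or.inr ⟨p, hp, rfl⟩
      rcases this with ⟨q, hq, e⟩ | ⟨q, hq, e⟩
      · simp at e
      · cases e; exact hq

lemma Res.leafSet_inj : {A : Formula} → (r s : Res A) → r.leafSet = s.leafSet → r = s
  | _, .lit _, .lit _, _ => rfl
  | _, .and ra rb, .and sa sb, h => by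
      obtain ⟨h1, h2⟩ := union_split h
      rw [ra.leafSet_inj sa h1, rb.leafSet_inj sb h2]
  | _, .orL ra, .orL sa, h => by
      rw [ra.leafSet_inj sa (image_cons_eq h)]
  | _, .orR rb, .orR sb, h => by
      rw [rb.leafSet_inj sb (image_cons_eq h)]
  | .or A B, .orL ra, .orR sb, h => by
      obtain ⟨p, hp⟩ := ra.leafSet_nonempty
      have hm : (false :: p) ∈ (Res.orL (B := B) ra).leafSet := by
        simp only [Res.leafSet]; exact ⟨p, hp, rfl⟩
      rw [h] at hm
      simp only [Res.leafSet] at hm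
      obtain ⟨q, _, e⟩ := hm
      simp at e
  | .or A B, .orR rb, .orL sa, h => by
      obtain ⟨p, hp⟩ := rb.leafSet_nonempty
      have hm : (true :: p) ∈ (Res.orR (A := A) rb).leafSet := by
        simp only [Res.leafSet]; exact ⟨p, hp, rfl⟩
      rw [h] at hm
      simp only [Res.leafSet] at hm
      obtain ⟨q, _, e⟩ := hm
      simp at e

theorem leafSet_injective (A : Formula) :
    Function.Injective (Res.leafSet (A := A)) ∧
    Set.range (Res.leafSet (A := A)) = A.cliques := by
  refine ⟨fun r s h => Res.leafSet_inj r s h, ?_⟩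
  ext L
  simp [Formula.cliques, Set.range]
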